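/- Let A be an abelian category and let Z assign to each object E of A a complex number Z(E), depending only on the isomorphism class of E and additive on short exact sequences. Assume that for every nonzero object E of A one has Z(E) ∈ {r e^{iπφ} : r > 0, φ ∈ (0, 1]}; write φ(E) ∈ (0, 1] for the unique phase with Z(E) ∈ ℝ_{>0} e^{iπφ(E)}. Call a nonzero object E Z-semistable if φ(F) ≤ φ(E) for every nonzero subobject F of E, and Z-stable if moreover φ(F) < φ(E) for every nonzero proper subobject F. Assume every object of A admits a Harder–Narasimhan filtration (a finite filtration whose successive quotients are Z-semistable with strictly decreasing phases), and that c_min := inf{Im Z(E) : E an object of A with Im Z(E) > 0} is strictly positive. Then a nonzero object E with Im Z(E) = c_min is Z-stable if and only if Hom(P, E) = 0 for every object P of A with Im Z(P) = 0. -/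
import Mathlib


open CategoryTheory Limits

variable {A : Type*} [Category A] [Abelian A]

/-- A nonzero object is `Z`-semistable (with respect to the phase function `φ`) if every
nonzero subobject has phase at most that of the object. -/
def ZSemistable (φ : A → ℝ) (E : A) : Prop :=
  ¬ IsZero E ∧ ∀ (F : A) (f : F ⟶ E), Mono f → ¬ IsZero F → φ F ≤ φ E

/-- A nonzero object is `Z`-stable if every nonzero proper subobject has phase strictly
smaller than that of the object. -/
def ZStable (φ : A → ℝ) (E : A) : Prop :=
  ¬ IsZero E ∧ ∀ (F : A) (f : F ⟶ E), Mono f → ¬ IsZero F → ¬ IsIso f → φ F < φ E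

/-- `E` admits a Harder–Narasimhan filtration: a finite filtration
`0 = E₀ ⊆ E₁ ⊆ ⋯ ⊆ E_N = E` whose successive quotients are `Z`-semistable with strictly
decreasing phases. -/
def HasHNFiltration (φ : A → ℝ) (E : A) : Prop :=
  ∃ (N : ℕ) (obj : Fin (N + 1) → A)
    (f : ∀ i : Fin N, obj i.castSucc ⟶ obj i.succ) (Q : Fin N → A),
    IsZero (obj 0) ∧ Nonempty (obj (Fin.last N) ≅ E) ∧ (∀ i, Mono (f i)) ∧
    (∀ i : Fin N, ∃ (p : obj i.succ ⟶ Q i) (w : f i ≫ p = 0),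
      (ShortComplex.mk (f i) p w).ShortExact ∧ ZSemistable φ (Q i)) ∧
    StrictAnti fun i => φ (Q i)

section Aux


/-- Polar coordinates of the central charge of a nonzero object. -/
lemma aux_polar (Z : A → ℂ) (φ : A → ℝ)
    (hφ : ∀ X : A, ¬ IsZero X → (0 < φ X ∧ φ X ≤ 1) ∧
      ∃ r : ℝ, 0 < r ∧ Z X = r * Complex.exp (Real.pi * φ X * Complex.I))
    (X : A) (hX : ¬ IsZero X) :
    ∃ r : ℝ, 0 < r ∧ (Z X).re = r * Real.cos (Real.pi * φ X) ∧
      (Z X).im = r * Real.sin (Real.pi * φ X) := by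
  obtain ⟨-, r, hr, hz⟩ := hφ X hX
  have e : ((Real.pi : ℂ) * (φ X : ℂ)) = ((Real.pi * φ X : ℝ) : ℂ) := by push_cast; ring
  refine ⟨r, hr, ?_, ?_⟩
  · rw [hz, e, Complex.re_ofReal_mul, Complex.exp_ofReal_mul_I_re]
  · rw [hz, e, Complex.im_ofReal_mul, Complex.exp_ofReal_mul_I_im]

/-- The central charge of a zero object vanishes. -/
lemma aux_zero (Z : A → ℂ)
    (hadd : ∀ S : ShortComplex A, S.ShortExact → Z S.X₂ = Z S.X₁ + Z S.X₃)
    {X : A} (hX : IsZero X) : Z X = 0 := by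
  have w : (𝟙 X) ≫ (𝟙 X) = 0 := hX.eq_of_src _ _
  have hse : (ShortComplex.mk (𝟙 X) (𝟙 X) w).ShortExact :=
    { exact := ShortComplex.exact_of_isZero_X₂ _ hX }
  have := hadd _ hse
  dsimp at this
  linear_combination -this

/-- The imaginary part of the central charge is nonnegative. -/
lemma aux_im_nonneg (Z : A → ℂ) (φ : A → ℝ)
    (hadd : ∀ S : ShortComplex A, S.ShortExact → Z S.X₂ = Z S.X₁ + Z S.X₃)
    (hφ : ∀ X : A, ¬ IsZero X → (0 < φ X ∧ φ X ≤ 1) ∧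
      ∃ r : ℝ, 0 < r ∧ Z X = r * Complex.exp (Real.pi * φ X * Complex.I))
    (X : A) : 0 ≤ (Z X).im := by
  by_cases hX : IsZero X
  · rw [aux_zero Z hadd hX]; simp
  · obtain ⟨r, hr, -, him⟩ := aux_polar Z φ hφ X hX
    obtain ⟨⟨h0, h1⟩, -⟩ := hφ X hX
    rw [him]
    have : 0 ≤ Real.sin (Real.pi * φ X) :=
      Real.sin_nonneg_of_nonneg_of_le_pi (by positivity)
        (by nlinarith [Real.pi_pos])
    positivity

/-- A nonzero object with purely real central charge has phase one and negative
real part of the charge. -/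
lemma aux_phase_one (Z : A → ℂ) (φ : A → ℝ)
    (hφ : ∀ X : A, ¬ IsZero X → (0 < φ X ∧ φ X ≤ 1) ∧
      ∃ r : ℝ, 0 < r ∧ Z X = r * Complex.exp (Real.pi * φ X * Complex.I))
    (X : A) (hX : ¬ IsZero X) (him : (Z X).im = 0) :
    φ X = 1 ∧ (Z X).re < 0 := by
  obtain ⟨r, hr, hre, him'⟩ := aux_polar Z φ hφ X hX
  obtain ⟨⟨h0, h1⟩, -⟩ := hφ X hX
  have hsin : Real.sin (Real.pi * φ X) = 0 := by
    rw [him'] at him; exact (mul_eq_zero.mp him).resolve_left (ne_of_gt hr)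
  have hφ1 : φ X = 1 := by
    by_contra hne
    have hlt : φ X < 1 := lt_of_le_of_ne h1 hne
    have : Real.pi * φ X = 0 := by
      rcases (Real.sin_eq_zero_iff_of_lt_of_lt
        (by nlinarith [Real.pi_pos]) (by nlinarith [Real.pi_pos])).mp hsin with h
      exact h
    nlinarith [Real.pi_pos]
  refine ⟨hφ1, ?_⟩
  rw [hre, hφ1, mul_one, Real.cos_pi]
  nlinarith

/-- An object with positive imaginary central charge has phase strictly less than one. -/
lemma aux_phase_lt_one (Z : A → ℂ) (φ : A → ℝ)
    (hφ : ∀ X : A, ¬ IsZero X → (0 < φ X ∧ φ X ≤ 1) ∧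
      ∃ r : ℝ, 0 < r ∧ Z X = r * Complex.exp (Real.pi * φ X * Complex.I))
    (X : A) (hX : ¬ IsZero X) (him : 0 < (Z X).im) : φ X < 1 := by
  obtain ⟨⟨h0, h1⟩, -⟩ := hφ X hX
  rcases lt_or_eq_of_le h1 with h | h
  · exact h
  · exfalso
    obtain ⟨r, hr, -, him'⟩ := aux_polar Z φ hφ X hX
    rw [him', h, mul_one, Real.sin_pi, mul_zero] at him
    exact lt_irrefl _ him

/-- Phase comparison for two objects with the same positive imaginary central charge. -/
lemma aux_compare (Z : A → ℂ) (φ : A → ℝ)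
    (hφ : ∀ X : A, ¬ IsZero X → (0 < φ X ∧ φ X ≤ 1) ∧
      ∃ r : ℝ, 0 < r ∧ Z X = r * Complex.exp (Real.pi * φ X * Complex.I))
    (F E : A) (hF : ¬ IsZero F) (hE : ¬ IsZero E)
    (him : (Z F).im = (Z E).im) (hpos : 0 < (Z E).im)
    (hre : (Z E).re < (Z F).re) : φ F < φ E := by
  obtain ⟨rF, hrF, hreF, himF⟩ := aux_polar Z φ hφ F hF
  obtain ⟨rE, hrE, hreE, himE⟩ := aux_polar Z φ hφ E hE
  obtain ⟨⟨hF0, -⟩, -⟩ := hφ F hF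
  obtain ⟨⟨hE0, -⟩, -⟩ := hφ E hE
  have hF1 : φ F < 1 := aux_phase_lt_one Z φ hφ F hF (him ▸ hpos)
  have hE1 : φ E < 1 := aux_phase_lt_one Z φ hφ E hE hpos
  set a := Real.pi * φ F with ha
  set b := Real.pi * φ E with hb
  have hpi := Real.pi_pos
  have hs : rF * Real.sin a = rE * Real.sin b := by rw [← himF, ← himE]; exact him
  have key : rF * rE * Real.sin (b - a) = (Z E).im * ((Z F).re - (Z E).re) := by
    rw [Real.sin_sub, hreF, hreE, himE]
    linear_combination (-(rE * Real.cos b)) * hs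
  have hsin : 0 < Real.sin (b - a) := by
    have h1 : 0 < (Z E).im * ((Z F).re - (Z E).re) := by
      apply mul_pos hpos; linarith
    nlinarith [mul_pos hrF hrE]
  have hab : a < b := by
    by_contra hle
    push_neg at hle
    have : 0 ≤ Real.sin (a - b) :=
      Real.sin_nonneg_of_nonneg_of_le_pi (by linarith) (by nlinarith)
    have h2 : Real.sin (b - a) = - Real.sin (a - b) := by rw [← Real.sin_neg, neg_sub]
    linarith
  have : Real.pi * φ F < Real.pi * φ E := hab
  exact lt_of_mul_lt_mul_left this (le_of_lt hpi)

end Aux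

/-- Criterion for stability of objects whose central charge has minimal positive
imaginary part: such an object is stable iff it receives no nonzero morphism from an
object with purely real central charge. -/
theorem stmt_11 (Z : A → ℂ) (φ : A → ℝ)
    (hiso : ∀ {X Y : A}, (X ≅ Y) → Z X = Z Y)
    (hadd : ∀ S : ShortComplex A, S.ShortExact → Z S.X₂ = Z S.X₁ + Z S.X₃)
    (hφ : ∀ X : A, ¬ IsZero X → (0 < φ X ∧ φ X ≤ 1) ∧
      ∃ r : ℝ, 0 < r ∧ Z X = r * Complex.exp (Real.pi * φ X * Complex.I))
    (hHN : ∀ E : A, HasHNFiltration φ E)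
    (cmin : ℝ) (hglb : IsGLB {y : ℝ | ∃ E : A, (Z E).im = y ∧ 0 < y} cmin)
    (hcmin : 0 < cmin)
    (E : A) (hE : ¬ IsZero E) (hEim : (Z E).im = cmin) :
    ZStable φ E ↔ ∀ P : A, (Z P).im = 0 → ∀ f : P ⟶ E, f = 0 := by
  have him_nonneg := aux_im_nonneg Z φ hadd hφ
  have hφE1 : φ E < 1 := aux_phase_lt_one Z φ hφ E hE (by rw [hEim]; exact hcmin)
  constructor
  · -- stable → no maps from purely real objects
    rintro ⟨-, hstab⟩ P hP f
    by_contra hf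
    have hPnz : ¬ IsZero P := fun h => hf (h.eq_of_src f 0)
    -- the coimage of f is a nonzero subobject of E
    set Q := Abelian.coimage f with hQdef
    have hQnz : ¬ IsZero Q := by
      intro h
      apply hf
      have : Abelian.factorThruCoimage f = 0 := h.eq_of_src _ _
      rw [← Abelian.coimage.fac f, this, comp_zero]
    -- short exact sequence ker f → P → Q
    have hse : (ShortComplex.mk (kernel.ι f) (cokernel.π (kernel.ι f))
        (cokernel.condition _)).ShortExact :=
      { exact := ShortComplex.exact_cokernel _ }
    have hZP : Z P = Z (kernel f) + Z Q := hadd _ hse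
    have himQ : (Z Q).im = 0 := by
      have h1 := him_nonneg (kernel f)
      have h2 := him_nonneg Q
      have := congrArg Complex.im hZP
      simp only [Complex.add_im] at this
      rw [hP] at this
      linarith
    have hφQ := (aux_phase_one Z φ hφ Q hQnz himQ).1
    by_cases hIso : IsIso (Abelian.factorThruCoimage f)
    · have : Z Q = Z E := hiso (asIso (Abelian.factorThruCoimage f))
      rw [this, hEim] at himQ
      linarith
    · have := hstab Q (Abelian.factorThruCoimage f) inferInstance hQnz hIso
      rw [hφQ] at this
      linarith
  · -- no maps from purely real objects → stable
    intro h
    refine ⟨hE, fun F f hm hF hni => ?_⟩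
    haveI := hm
    -- short exact sequence F → E → coker f
    set Q := cokernel f with hQdef
    have hse : (ShortComplex.mk f (cokernel.π f) (cokernel.condition f)).ShortExact :=
      { exact := ShortComplex.exact_cokernel f }
    have hZE : Z E = Z F + Z Q := hadd _ hse
    have hQnz : ¬ IsZero Q := by
      intro hz
      apply hni
      have : cokernel.π f = 0 := hz.eq_of_tgt _ _
      haveI : Epi f := Abelian.epi_of_cokernel_π_eq_zero f this
      exact isIso_of_mono_of_epi f
    have himsum : cmin = (Z F).im + (Z Q).im := by
      have := congrArg Complex.im hZE
      simp only [Complex.add_im] at this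
      rw [hEim] at this
      exact this
    have hFim_nonneg := him_nonneg F
    have hQim_nonneg := him_nonneg Q
    -- F cannot have purely real charge
    have hFim_pos : 0 < (Z F).im := by
      rcases lt_or_eq_of_le hFim_nonneg with hpos | heq
      · exact hpos
      · exfalso
        have : f = 0 := h F heq.symm f
        exact hF (Limits.IsZero.of_mono_eq_zero f this)
    -- hence its imaginary part is at least cmin, so equals cmin
    have hge : cmin ≤ (Z F).im := hglb.1 ⟨F, rfl, hFim_pos⟩
    have himQ0 : (Z Q).im = 0 := by linarith
    have himF : (Z F).im = (Z E).im := by rw [hEim]; linarith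
    -- the quotient has negative real charge
    have hreQ := (aux_phase_one Z φ hφ Q hQnz himQ0).2
    have hre : (Z E).re < (Z F).re := by
      have := congrArg Complex.re hZE
      simp only [Complex.add_re] at this
      linarith
    exact aux_compare Z φ hφ F E hF hE himF (by rw [hEim]; exact hcmin) hre
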